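/- Let α, γ, δ, ε ∈ ℂ with ε ≠ 0, α ≠ 0, γ not a nonpositive integer, and γ − α/ε = −N for a nonnegative integer N. Define a_n by a_0 = 1 and R_n a_n + Q_{n−1}a_{n−1} + P_{n−2}a_{n−2} = 0 with R_n = −n(γ+n−1), Q_n = n(γ+n−1) − εδ − q, P_n = δ(ε − α/(γ+n)). Then P_N = 0, and if additionally a_{N+1} = 0 then u(z) = Σ_{n=0}^{N} a_n ₁F₁(α/ε; γ+n; −εz) is a quasi-polynomial: u(z) = e^{−εz}·p(z) with p a polynomial in z of degree at most N. -/

import Mathlib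

open PowerSeries

/-- Pochhammer symbol `(a)_k = a (a+1) ⋯ (a+k−1)` in `ℂ`. -/
noncomputable def poch (a : ℂ) (k : ℕ) : ℂ := (ascPochhammer ℂ k).eval a

/-- Kummer confluent hypergeometric series `₁F₁(a;b;sz)` as a formal power series in `z`. -/
noncomputable def F1 (a b s : ℂ) : PowerSeries ℂ :=
  PowerSeries.mk fun k => poch a k / poch b k * s ^ k / (k.factorial : ℂ)

/-- Formal derivative of a power series. -/
noncomputable def D (f : PowerSeries ℂ) : PowerSeries ℂ := f.derivativeFun

/-- The exponential series `e^{tz}` as a formal power series in `z`. -/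
noncomputable def Exp (t : ℂ) : PowerSeries ℂ :=
  PowerSeries.mk fun k => t ^ k / (k.factorial : ℂ)

lemma poch_zero (a : ℂ) : poch a 0 = 1 := by simp [poch]

lemma poch_succ_right (a : ℂ) (k : ℕ) : poch a (k+1) = poch a k * (a + k) := by
  simp [poch, ascPochhammer_succ_right]

lemma poch_succ_left (a : ℂ) (k : ℕ) : poch a (k+1) = a * poch (a+1) k := by
  simp [poch, ascPochhammer_succ_left, Polynomial.eval_comp]

lemma poch_ne_zero {b : ℂ} (hb : ∀ j : ℕ, b + (j:ℂ) ≠ 0) (k : ℕ) : poch b k ≠ 0 := by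
  induction k with
  | zero => simp [poch_zero]
  | succ k ih => rw [poch_succ_right]; exact mul_ne_zero ih (hb k)

lemma poch_neg_nat {m k : ℕ} (h : m < k) : poch (-(m:ℂ)) k = 0 := by
  induction k with
  | zero => omega
  | succ k ih =>
    rw [poch_succ_right]
    rcases Nat.lt_or_ge m k with hk | hk
    · rw [ih hk, zero_mul]
    · have : m = k := by omega
      subst this
      simp

lemma vand : ∀ (k : ℕ) (a b : ℂ), (∀ j : ℕ, b + (j:ℂ) ≠ 0) →
    ∑ j ∈ Finset.range (k+1), (-1:ℂ)^j * (k.choose j) * poch a j / poch b j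
      = poch (b - a) k / poch b k := by
  intro k
  induction k with
  | zero => intro a b hb; simp [poch_zero]
  | succ k ih =>
    intro a b hb
    have hb0 : b ≠ 0 := by simpa using hb 0
    have hb1 : ∀ j : ℕ, (b+1) + (j:ℂ) ≠ 0 := by
      intro j
      have h := hb (j+1); push_cast at h
      rwa [show (b+1)+(j:ℂ) = b + ((j:ℂ)+1) by ring]
    have hpb1 : poch (b+1) k ≠ 0 := poch_ne_zero hb1 k
    have hpb : poch b k ≠ 0 := poch_ne_zero hb k
    have hbk : b + (k:ℂ) ≠ 0 := hb k
    rw [Finset.sum_range_succ']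
    have hsplit : ∀ i ∈ Finset.range (k+1),
        (-1:ℂ)^(i+1) * (((k+1).choose (i+1) : ℕ) : ℂ) * poch a (i+1) / poch b (i+1)
        = (-1:ℂ)^(i+1) * ((k.choose (i+1) : ℕ) : ℂ) * poch a (i+1) / poch b (i+1)
          + (-(a/b)) * ((-1:ℂ)^i * ((k.choose i : ℕ) : ℂ) * poch (a+1) i / poch (b+1) i) := by
      intro i _
      rw [Nat.choose_succ_succ' k i, poch_succ_left a, poch_succ_left b]
      push_cast
      have hpbi : poch (b+1) i ≠ 0 := poch_ne_zero hb1 i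
      field_simp
      ring
    rw [Finset.sum_congr rfl hsplit, Finset.sum_add_distrib]
    have hB : ∑ i ∈ Finset.range (k+1),
        (-1:ℂ)^(i+1) * ((k.choose (i+1) : ℕ) : ℂ) * poch a (i+1) / poch b (i+1)
        = poch (b-a) k / poch b k - 1 := by
      rw [Finset.sum_range_succ]
      simp only [Nat.choose_succ_self, Nat.cast_zero, mul_zero, zero_mul, zero_div, add_zero]
      rw [← ih a b hb, Finset.sum_range_succ']
      simp [poch_zero]
    have hA : ∑ i ∈ Finset.range (k+1),
        (-(a/b)) * ((-1:ℂ)^i * ((k.choose i : ℕ) : ℂ) * poch (a+1) i / poch (b+1) i)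
        = (-(a/b)) * (poch (b-a) k / poch (b+1) k) := by
      rw [← Finset.mul_sum, ih (a+1) (b+1) hb1]
      ring_nf
    rw [hB, hA]
    simp only [pow_zero, Nat.choose_zero_right, Nat.cast_one, poch_zero, one_mul, mul_one,
      div_one]
    have hlink : poch b k = b * poch (b+1) k / (b + k) := by
      rw [eq_div_iff hbk, ← poch_succ_right, poch_succ_left]
    rw [poch_succ_right (b-a) k, poch_succ_right b k, hlink]
    field_simp
    ring

lemma kummer (a b s : ℂ) (hb : ∀ j : ℕ, b + (j:ℂ) ≠ 0) :
    F1 a b (-s) = Exp (-s) * F1 (b - a) b s := by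
  ext k
  rw [PowerSeries.coeff_mul, Finset.Nat.sum_antidiagonal_eq_sum_range_succ_mk]
  simp only [F1, Exp, coeff_mk]
  rw [← Finset.sum_range_reflect]
  have hterm : ∀ j ∈ Finset.range (k+1),
      (-s)^(k+1-1-j) / (((k+1-1-j).factorial : ℕ) : ℂ)
        * (poch (b-a) (k-(k+1-1-j)) / poch b (k-(k+1-1-j)) * s ^ (k-(k+1-1-j))
            / (((k-(k+1-1-j)).factorial : ℕ) : ℂ))
      = (-1:ℂ)^k * s^k / ((k.factorial : ℕ) : ℂ)
          * ((-1:ℂ)^j * ((k.choose j : ℕ) : ℂ) * poch (b-a) j / poch b j) := by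
    intro j hj
    have hjk : j ≤ k := Nat.lt_succ_iff.mp (Finset.mem_range.mp hj)
    have h1 : k + 1 - 1 - j = k - j := by omega
    have h2 : k - (k - j) = j := Nat.sub_sub_self hjk
    rw [h1, h2]
    have hfacn : (k.choose j) * (j.factorial) * ((k-j).factorial) = k.factorial :=
      Nat.choose_mul_factorial_mul_factorial hjk
    have hfac : ((k.choose j : ℕ) : ℂ) * ((j.factorial : ℕ) : ℂ) * (((k-j).factorial : ℕ) : ℂ)
        = ((k.factorial : ℕ) : ℂ) := by exact_mod_cast congrArg (Nat.cast (R := ℂ)) hfacn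
    have hs : s^(k-j) * s^j = s^k := by rw [← pow_add, Nat.sub_add_cancel hjk]
    have hm : (-1:ℂ)^(k-j) * (-1:ℂ)^j = (-1:ℂ)^k := by
      rw [← pow_add, Nat.sub_add_cancel hjk]
    have hf1 : ((j.factorial : ℕ) : ℂ) ≠ 0 := Nat.cast_ne_zero.mpr (Nat.factorial_ne_zero j)
    have hf2 : (((k-j).factorial : ℕ) : ℂ) ≠ 0 := Nat.cast_ne_zero.mpr (Nat.factorial_ne_zero _)
    have hf3 : ((k.factorial : ℕ) : ℂ) ≠ 0 := Nat.cast_ne_zero.mpr (Nat.factorial_ne_zero k)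
    have hpb : poch b j ≠ 0 := poch_ne_zero hb j
    have hj2 : ((-1:ℂ)^j)^2 = 1 := by
      rw [← pow_mul, mul_comm, pow_mul]; norm_num
    have hA : (-1:ℂ)^(k-j) = (-1:ℂ)^k * (-1:ℂ)^j := by
      linear_combination (-1:ℂ)^j * hm - (-1:ℂ)^(k-j) * hj2
    rw [neg_pow s (k-j)]
    field_simp
    rw [← hfac]
    linear_combination (poch (b-a) j * ((k.choose j : ℕ):ℂ) * ((j.factorial : ℕ):ℂ) *
        (((k-j).factorial : ℕ):ℂ) * ((-1:ℂ)^(k-j))) * hs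
      + (poch (b-a) j * ((k.choose j : ℕ):ℂ) * ((j.factorial : ℕ):ℂ) *
        (((k-j).factorial : ℕ):ℂ) * s^k) * hA
  rw [Finset.sum_congr rfl hterm, ← Finset.mul_sum, vand k (b-a) b hb]
  have hba : b - (b - a) = a := by ring
  rw [hba, neg_pow s k]
  ring

/-- Termination of the section 2.3 expansion: if `γ − α/ε = −N` then `P_N = 0`, and if
moreover `a_{N+1} = 0` then `u = Σ_{n=0}^{N} a_n ₁F₁(α/ε; γ+n; −εz)` is a quasi-polynomial
`e^{−εz} p(z)` with `deg p ≤ N`. -/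
theorem stmt_17 (α γ δ q ε : ℂ) (hε : ε ≠ 0) (hα : α ≠ 0)
    (hγ : ∀ k : ℕ, γ + k ≠ 0) (N : ℕ) (hN : γ - α / ε = -(N : ℂ))
    (R Q P : ℕ → ℂ)
    (hR : ∀ n : ℕ, R n = -(n : ℂ) * (γ + n - 1))
    (hQ : ∀ n : ℕ, Q n = (n : ℂ) * (γ + n - 1) - ε * δ - q)
    (hP : ∀ n : ℕ, P n = δ * (ε - α / (γ + n)))
    (a : ℕ → ℂ) (ha0 : a 0 = 1)
    (hrec1 : R 1 * a 1 + Q 0 * a 0 = 0)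
    (hrec : ∀ n : ℕ, R (n + 2) * a (n + 2) + Q (n + 1) * a (n + 1) + P n * a n = 0) :
    P N = 0 ∧
      (a (N + 1) = 0 →
        ∃ p : Polynomial ℂ, p.natDegree ≤ N ∧
          (∑ n ∈ Finset.range (N + 1),
              PowerSeries.C (a n) * F1 (α / ε) (γ + n) (-ε))
            = Exp (-ε) * (p : PowerSeries ℂ)) := by
  have hγN : γ + (N:ℂ) = α / ε := by linear_combination hN
  constructor
  · rw [hP, hγN]
    have hαε : α / ε ≠ 0 := div_ne_zero hα hε
    field_simp
    ring
  · intro _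
    have hbn : ∀ n : ℕ, ∀ j : ℕ, (γ + (n:ℂ)) + (j:ℂ) ≠ 0 := by
      intro n j
      have h := hγ (n + j); push_cast at h
      rwa [show (γ + (n:ℂ)) + (j:ℂ) = γ + ((n:ℂ) + (j:ℂ)) by ring]
    set c : ℕ → ℕ → ℂ := fun n k =>
      poch ((γ + n) - α/ε) k / poch (γ + n) k * ε ^ k / (k.factorial : ℂ) with hc
    have hcz : ∀ n k, n ≤ N → N - n < k → c n k = 0 := by
      intro n k hn hk
      have hneg : (γ + (n:ℂ)) - α/ε = -(((N - n : ℕ) : ℂ)) := by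
        push_cast [Nat.cast_sub hn]
        linear_combination hN
      rw [hc]
      simp only
      rw [hneg, poch_neg_nat hk, zero_div, zero_mul, zero_div]
    refine ⟨∑ n ∈ Finset.range (N+1), Polynomial.C (a n) *
      (∑ k ∈ Finset.range (N+1), Polynomial.C (c n k) * Polynomial.X ^ k), ?_, ?_⟩
    · apply Polynomial.natDegree_sum_le_of_forall_le
      intro n _
      refine le_trans (Polynomial.natDegree_C_mul_le _ _) ?_
      apply Polynomial.natDegree_sum_le_of_forall_le
      intro k hk
      refine le_trans (Polynomial.natDegree_C_mul_le _ _) ?_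
      rw [Polynomial.natDegree_X_pow]
      exact Nat.lt_succ_iff.mp (Finset.mem_range.mp hk)
    · have hkum : ∀ n ∈ Finset.range (N+1),
          PowerSeries.C (a n) * F1 (α / ε) (γ + n) (-ε)
          = Exp (-ε) * (PowerSeries.C (a n) * F1 ((γ + n) - α/ε) (γ + n) ε) := by
        intro n _
        rw [kummer (α/ε) (γ + n) ε (hbn n)]
        ring
      rw [Finset.sum_congr rfl hkum, ← Finset.mul_sum]
      congr 1
      ext k
      rw [Polynomial.coeff_coe, map_sum, Polynomial.finset_sum_coeff]
      apply Finset.sum_congr rfl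
      intro n hn
      have hnN : n ≤ N := Nat.lt_succ_iff.mp (Finset.mem_range.mp hn)
      rw [PowerSeries.coeff_C_mul, Polynomial.coeff_C_mul, Polynomial.finset_sum_coeff]
      congr 1
      simp only [Polynomial.coeff_C_mul, Polynomial.coeff_X_pow, mul_ite, mul_one, mul_zero]
      rw [Finset.sum_ite_eq (Finset.range (N+1)) k (fun k' => c n k')]
      by_cases hk : k ∈ Finset.range (N+1)
      · rw [if_pos hk]
        simp [F1, coeff_mk, hc]
      · rw [if_neg hk]
        have hkN : N - n < k := by
          have := Finset.mem_range.not.mp hk; omega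
        rw [show (PowerSeries.coeff k) (F1 ((γ + n) - α/ε) (γ + n) ε)
          = c n k from by simp [F1, coeff_mk, hc]]
        exact hcz n k hnN hkN
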